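/- Let V ⊆ X, O ⊆ X, z_0 ∈ X, and let G be a real-valued function defined on O ∪ {z_0}. Suppose p ∈ X is between V and z_0, i.e. d_L(x, z_0) = d_L(x, p) + d_L(p, z_0) for every x ∈ V, and suppose there exist z', z'' ∈ O ∩ V with G(z') + d_L(z', p) ≤ G(z_0) + d_L(z_0, p) and G(z'') − d_L(z'', p) ≥ G(z_0) − d_L(z_0, p). Then z_0 is redundant on V with respect to O ∩ V: every (x, y) ∈ V × ℝ satisfying |y − G(z)| ≤ d_L(x, z) for all z ∈ O ∩ V also satisfies |y − G(z_0)| ≤ d_L(x, z_0). -/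

import Mathlib

/-!
The weighted sum `d_L` satisfies the triangle inequality, and betweenness makes it additive
through `p`. Hence the cone constraint at `z'` already gives
`y ≤ G z' + d_L(x, p) + d_L(p, z') ≤ G z₀ + d_L(z₀, p) + d_L(x, p) = G z₀ + d_L(x, z₀)`,
and the lower bound follows symmetrically from the constraint at `z''`.
-/

open Finset

section WeightedDist

variable {K : ℕ} {X : Fin K → Type*} [∀ k, PseudoMetricSpace (X k)]

def weightedDist (L : Fin K → ℝ) (x x' : ∀ k, X k) : ℝ :=
  ∑ k, L k * dist (x k) (x' k)

theorem weightedDist_comm (L : Fin K → ℝ) (x x' : ∀ k, X k) :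
    weightedDist L x x' = weightedDist L x' x := by
  simp only [weightedDist, dist_comm]

theorem weightedDist_triangle {L : Fin K → ℝ} (hL : ∀ k, 0 ≤ L k) (x x' x'' : ∀ k, X k) :
    weightedDist L x x'' ≤ weightedDist L x x' + weightedDist L x' x'' := by
  rw [weightedDist, weightedDist, weightedDist, ← sum_add_distrib]
  gcongr with k
  rw [← mul_add]
  exact mul_le_mul_of_nonneg_left (dist_triangle _ _ _) (hL k)

theorem sub_le_weightedDist_of_between {L : Fin K → ℝ} (hL : ∀ k, 0 ≤ L k)
    {x p z z₀ : ∀ k, X k} {y a a₀ : ℝ}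
    (hbetween : weightedDist L x z₀ = weightedDist L x p + weightedDist L p z₀)
    (hz : a + weightedDist L z p ≤ a₀ + weightedDist L z₀ p)
    (hy : y - a ≤ weightedDist L x z) :
    y - a₀ ≤ weightedDist L x z₀ := by
  have htri := weightedDist_triangle hL x p z
  rw [weightedDist_comm L p z] at htri
  rw [hbetween, weightedDist_comm L p z₀]
  linarith

end WeightedDist

/-- Redundant data points.  Let `V, O ⊆ X`, `z₀ ∈ X`, and let `G` be
real-valued on `O ∪ {z₀}`.  Suppose `p ∈ X` is between `V` and `z₀`
(`d_L(x, z₀) = d_L(x, p) + d_L(p, z₀)` for all `x ∈ V`), and there exist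
`z', z'' ∈ O ∩ V` with `G z' + d_L(z', p) ≤ G z₀ + d_L(z₀, p)` and
`G z'' − d_L(z'', p) ≥ G z₀ − d_L(z₀, p)`.  Then `z₀` is redundant on `V` with respect
to `O ∩ V`: every `(x, y) ∈ V × ℝ` with `|y − G z| ≤ d_L(x, z)` for all `z ∈ O ∩ V`
also satisfies `|y − G z₀| ≤ d_L(x, z₀)`. -/
theorem redundant_data_point
    {K : ℕ} {X : Fin K → Type*} [∀ k, MetricSpace (X k)]
    (L : Fin K → ℝ) (hL : ∀ k, 0 ≤ L k)
    (V O : Set (∀ k, X k)) (z₀ : ∀ k, X k) (G : (∀ k, X k) → ℝ)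
    (p : ∀ k, X k)
    (hbetween : ∀ x ∈ V, (∑ k, L k * dist (x k) (z₀ k)) =
      (∑ k, L k * dist (x k) (p k)) + (∑ k, L k * dist (p k) (z₀ k)))
    (hz' : ∃ z' ∈ O ∩ V,
      G z' + (∑ k, L k * dist (z' k) (p k)) ≤ G z₀ + (∑ k, L k * dist (z₀ k) (p k)))
    (hz'' : ∃ z'' ∈ O ∩ V,
      G z₀ - (∑ k, L k * dist (z₀ k) (p k)) ≤ G z'' - (∑ k, L k * dist (z'' k) (p k))) :
    ∀ x ∈ V, ∀ y : ℝ,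
      (∀ z ∈ O ∩ V, |y - G z| ≤ ∑ k, L k * dist (x k) (z k)) →
      |y - G z₀| ≤ ∑ k, L k * dist (x k) (z₀ k) := by
  intro x hx y hy_cone
  change ∀ z ∈ O ∩ V, |y - G z| ≤ weightedDist L x z at hy_cone
  show |y - G z₀| ≤ weightedDist L x z₀
  obtain ⟨z', hz'_mem, hz'_le⟩ := hz'
  obtain ⟨z'', hz''_mem, hz''_le⟩ := hz''
  have hx_between : weightedDist L x z₀ = weightedDist L x p + weightedDist L p z₀ :=
    hbetween x hx
  have h' := abs_le.mp (hy_cone z' hz'_mem)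
  have h'' := abs_le.mp (hy_cone z'' hz''_mem)
  have upper : y - G z₀ ≤ weightedDist L x z₀ :=
    sub_le_weightedDist_of_between hL hx_between hz'_le h'.2
  -- the lower bound is the upper bound for the reflected data `-y`, `-G`
  have lower : -y - -G z₀ ≤ weightedDist L x z₀ :=
    sub_le_weightedDist_of_between (a := -G z'') hL hx_between
      (by unfold weightedDist; linarith) (by linarith [h''.1])
  exact abs_le.mpr ⟨by linarith, upper⟩
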